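/- Let G be a simple graph on n ≥ 7 vertices with Δ(G) ≤ n−3, let r ≥ 1 be an integer, and let u be a vertex of G that is not the unique vertex of degree Δ(G) (i.e., either deg(u,G) < Δ(G) or there exists v ≠ u with deg(v,G) = Δ(G)). Define the finite sets D = { deg_r(x, G−v) : v ∈ V(G)∖{u}, x ∈ V(G)∖{v}, deg(x, G−v) = Δ(G) } and M = { κ_r(G−v) : v ∈ V(G)∖{u}, deg(v,G) = Δ(G) }; both D and M are nonempty. Then κ_r(G) = min D + max M, or κ_r(G) = max D + min M. -/

import Mathlib

open SimpleGraph

/-- `kappa G r` is the number of `r`-cliques of the graph `G`. -/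
noncomputable def kappa {V : Type*} (G : SimpleGraph V) (r : ℕ) : ℕ :=
  (G.cliqueSet r).ncard

/-- `degR G r v` is the number of `r`-cliques of `G` that contain the vertex `v`. -/
noncomputable def degR {V : Type*} (G : SimpleGraph V) (r : ℕ) (v : V) : ℕ :=
  {s | s ∈ G.cliqueSet r ∧ v ∈ s}.ncard

/-- `deg G v` is the degree of the vertex `v` in `G`. -/
noncomputable def deg {V : Type*} (G : SimpleGraph V) (v : V) : ℕ :=
  (G.neighborSet v).ncard

/-- `gcard G v` is the card `G - v`: the induced subgraph of `G` on `V(G) \ {v}`. -/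
def gcard {V : Type*} (G : SimpleGraph V) (v : V) : SimpleGraph {x : V // x ≠ v} :=
  G.induce {x : V | x ≠ v}

/-- The maximum degree `Δ(G)`. -/
noncomputable def maxDeg {n : ℕ} (G : SimpleGraph (Fin n)) : ℕ :=
  Finset.univ.sup (fun v => deg G v)

/-- The minimum degree `δ(G)`. -/
noncomputable def minDeg {n : ℕ} (G : SimpleGraph (Fin n)) : ℕ :=
  sInf (Set.range (fun v => deg G v))

/-- `ℓ(G)`: the number of vertices of maximum degree. -/
noncomputable def numMaxDeg {n : ℕ} (G : SimpleGraph (Fin n)) : ℕ :=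
  (Finset.univ.filter (fun v => deg G v = maxDeg G)).card

/-- `G` and `H` share `n-1` cards via the vertices `u`, `w` and the bijection `π`:
for every `v ≠ u`, the card `G - v` is isomorphic to the card `H - π(v)`. -/
def ShareCardsVia {n : ℕ} (G H : SimpleGraph (Fin n)) (u w : Fin n)
    (π : {x : Fin n // x ≠ u} ≃ {y : Fin n // y ≠ w}) : Prop :=
  ∀ v : {x : Fin n // x ≠ u}, Nonempty (gcard G v.1 ≃g gcard H (π v).1)

/-- `G` and `H` share `n-1` cards. -/
def ShareCards {n : ℕ} (G H : SimpleGraph (Fin n)) : Prop :=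
  ∃ (u w : Fin n) (π : {x : Fin n // x ≠ u} ≃ {y : Fin n // y ≠ w}),
    ShareCardsVia G H u w π

/-!
Deleting `v` removes exactly the `r`-cliques through `v`, so `κ_r(G - v) = κ_r(G) - deg_r(v, G)`.
A vertex `x` has degree `Δ` in `G - v` iff `deg(x, G) = Δ` and `x ≁ v`, and then
`deg_r(x, G - v) = deg_r(x, G)`; as `Δ ≤ n - 3`, every vertex of degree `Δ` has such a non-neighbour
`v ∉ {u, x}`. Hence `D = deg_r(A)` and `M = κ_r(G) - deg_r(A \ {u})` for the set `A` of vertices of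
degree `Δ`, and adding the single vertex `u` to `A \ {u}` changes at most one of the minimum and
the maximum of `deg_r`.
-/

section Card

variable {V : Type*} {G : SimpleGraph V} {v : V} {r : ℕ}

lemma isNClique_gcard_iff {t : Finset {x : V // x ≠ v}} :
    (gcard G v).IsNClique r t ↔ G.IsNClique r (t.map (.subtype _)) :=
  isNClique_induce_iff _ _ _

lemma image_cliqueSet_gcard :
    Finset.map (.subtype _) '' (gcard G v).cliqueSet r = {s | s ∈ G.cliqueSet r ∧ v ∉ s} := by
  classical
  ext s
  simp only [Set.mem_image, mem_cliqueSet_iff, isNClique_gcard_iff, Set.mem_ofPred_eq]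
  constructor
  · rintro ⟨t, ht, rfl⟩
    refine ⟨ht, fun hv => ?_⟩
    obtain ⟨⟨a, ha⟩, -, hav⟩ := Finset.mem_map.1 hv
    exact ha hav
  · rintro ⟨hs, hv⟩
    have hmap : (s.subtype (· ≠ v)).map (.subtype _) = s := by
      rw [Finset.subtype_map, Finset.filter_true_of_mem]
      exact fun a ha hav => hv (hav ▸ ha)
    exact ⟨s.subtype (· ≠ v), by rwa [hmap], hmap⟩

lemma kappa_gcard : kappa (gcard G v) r = {s | s ∈ G.cliqueSet r ∧ v ∉ s}.ncard := by
  rw [kappa, ← image_cliqueSet_gcard,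
    Set.ncard_image_of_injective _ (Finset.map_injective _)]

lemma kappa_gcard_eq_kappa_sub_degR [Finite V] :
    kappa (gcard G v) r = kappa G r - degR G r v := by
  rw [kappa_gcard]
  exact Nat.eq_sub_of_add_eq'
    (Set.ncard_inter_add_ncard_sdiff_eq_ncard _ {s | v ∈ s} (Set.toFinite _))

lemma degR_le_kappa [Finite V] (x : V) : degR G r x ≤ kappa G r :=
  Set.ncard_le_ncard (fun _ hs => hs.1) (Set.toFinite _)

lemma degR_gcard_of_not_adj {x : {y : V // y ≠ v}} (hxv : ¬ G.Adj x v) :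
    degR (gcard G v) r x = degR G r x := by
  have himage : Finset.map (.subtype _) '' {s | s ∈ (gcard G v).cliqueSet r ∧ x ∈ s}
      = {s | s ∈ G.cliqueSet r ∧ x.1 ∈ s} := by
    ext s
    constructor
    · rintro ⟨t, ⟨ht, hx⟩, rfl⟩
      exact ⟨(image_cliqueSet_gcard.le ⟨t, ht, rfl⟩).1, Finset.mem_map_of_mem _ hx⟩
    · rintro ⟨hs, hx⟩
      have hv : v ∉ s := fun hv => hxv (hs.1 hx hv x.2)
      obtain ⟨t, ht, rfl⟩ := image_cliqueSet_gcard.ge ⟨hs, hv⟩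
      obtain ⟨y, hy, hyx⟩ := Finset.mem_map.1 hx
      exact ⟨t, ⟨ht, Subtype.val_injective hyx ▸ hy⟩, rfl⟩
  rw [degR, degR, ← himage, Set.ncard_image_of_injective _ (Finset.map_injective _)]

lemma deg_gcard (x : {y : V // y ≠ v}) :
    deg (gcard G v) x = (G.neighborSet x \ {v}).ncard := by
  have himage : Subtype.val '' (gcard G v).neighborSet x = G.neighborSet x \ {v} := by
    ext a
    simp only [Set.mem_image, mem_neighborSet, gcard, comap_adj, Function.Embedding.coe_subtype,
      Set.mem_sdiff, Set.mem_singleton_iff, Subtype.exists, exists_and_right,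
      exists_eq_right, induce]
    tauto
  rw [deg, ← himage, Set.ncard_image_of_injective _ Subtype.val_injective]

lemma exists_ne_ne_not_adj [Finite V] (u x : V) (hx : deg G x + 3 ≤ Nat.card V) :
    ∃ v, v ≠ u ∧ v ≠ x ∧ ¬ G.Adj x v := by
  by_contra! hadj
  have hcover : (Set.univ : Set V) ⊆ insert u (insert x (G.neighborSet x)) := fun v _ =>
    or_iff_not_imp_left.2 fun hvu => or_iff_not_imp_left.2 fun hvx => hadj v hvu hvx
  have hcard := Set.ncard_le_ncard hcover (Set.toFinite _)
  rw [Set.ncard_univ] at hcard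
  have hinsert_u := Set.ncard_insert_le u (insert x (G.neighborSet x))
  have hinsert_x := Set.ncard_insert_le x (G.neighborSet x)
  unfold deg at hx
  omega

end Card

section Order

lemma csInf_eq_or_csSup_eq_of_subset_insert {α : Type*} [ConditionallyCompleteLinearOrder α]
    {S T : Set α} {a : α} (hne : S.Nonempty) (hfin : S.Finite) (hST : S ⊆ T)
    (hTS : T ⊆ insert a S) : sInf T = sInf S ∨ sSup T = sSup S := by
  by_cases ha : a ∈ T
  · rw [hTS.antisymm (Set.insert_subset ha hST), csInf_insert hfin.bddBelow hne,
      csSup_insert hfin.bddAbove hne]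
    rcases le_total (sInf S) a with h | h
    · exact .inl (inf_eq_right.2 h)
    · exact .inr (sup_eq_right.2 (h.trans (csInf_le_csSup hne hfin.bddBelow hfin.bddAbove)))
  · rw [hST.antisymm fun t ht => (hTS ht).resolve_left (by rintro rfl; exact ha ht)]
    exact .inl rfl

variable (k : ℕ) {S : Set ℕ}

lemma csSup_image_tsub (hne : S.Nonempty) (hfin : S.Finite) :
    sSup ((k - ·) '' S) = k - sInf S :=
  (Set.Finite.map_sInf_of_monotone (β := ℕᵒᵈ) (f := fun y => OrderDual.toDual (k - y))
    (fun _ _ h => tsub_le_tsub_left h k) hne hfin).symm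

lemma csInf_image_tsub (hne : S.Nonempty) (hfin : S.Finite) :
    sInf ((k - ·) '' S) = k - sSup S :=
  (Set.Finite.map_sSup_of_monotone (β := ℕᵒᵈ) (f := fun y => OrderDual.toDual (k - y))
    (fun _ _ h => tsub_le_tsub_left h k) hne hfin).symm

end Order

section MaxDeg

variable {n : ℕ} {G : SimpleGraph (Fin n)} {r : ℕ}

lemma deg_le_maxDeg (x : Fin n) : deg G x ≤ maxDeg G :=
  Finset.le_sup (Finset.mem_univ x)

lemma exists_deg_eq_maxDeg_ne {u : Fin n}
    (hu : deg G u < maxDeg G ∨ ∃ v : Fin n, v ≠ u ∧ deg G v = maxDeg G) :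
    ∃ v, v ≠ u ∧ deg G v = maxDeg G := by
  refine hu.elim (fun hlt => ?_) id
  obtain ⟨v, -, hv⟩ := Finset.exists_mem_eq_sup Finset.univ ⟨u, Finset.mem_univ u⟩
    (fun v => deg G v)
  exact ⟨v, by rintro rfl; exact hlt.ne hv.symm, hv.symm⟩

lemma deg_gcard_eq_maxDeg_iff {v : Fin n} {x : {y : Fin n // y ≠ v}} :
    deg (gcard G v) x = maxDeg G ↔ deg G x = maxDeg G ∧ ¬ G.Adj x v := by
  rw [deg_gcard]
  by_cases hxv : G.Adj x v
  · have hmem : v ∈ G.neighborSet x := hxv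
    have hpos : 0 < deg G x := (Set.ncard_pos (Set.toFinite _)).2 ⟨v, hmem⟩
    have hle := deg_le_maxDeg (G := G) x
    rw [Set.ncard_sdiff_singleton_of_mem hmem]
    unfold deg at hpos hle
    simp only [hxv, not_true_eq_false, and_false, iff_false]
    omega
  · rw [Set.sdiff_singleton_eq_self (show v ∉ G.neighborSet x from hxv)]
    simp [hxv, deg]

lemma setOf_degR_gcard_eq_image (u : Fin n) (hΔ : maxDeg G + 3 ≤ n) :
    {d | ∃ v : Fin n, v ≠ u ∧ ∃ x : {y : Fin n // y ≠ v},
      deg (gcard G v) x = maxDeg G ∧ d = degR (gcard G v) r x}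
      = degR G r '' {x | deg G x = maxDeg G} := by
  ext d
  constructor
  · rintro ⟨v, -, x, hx, rfl⟩
    obtain ⟨hxΔ, hxv⟩ := deg_gcard_eq_maxDeg_iff.1 hx
    exact ⟨x, hxΔ, (degR_gcard_of_not_adj hxv).symm⟩
  · rintro ⟨x, hxΔ, rfl⟩
    obtain ⟨v, hvu, hvx, hxv⟩ := exists_ne_ne_not_adj (G := G) u x
      (by rw [Nat.card_eq_fintype_card, Fintype.card_fin, hxΔ]; exact hΔ)
    exact ⟨v, hvu, ⟨x, hvx.symm⟩, deg_gcard_eq_maxDeg_iff.2 ⟨hxΔ, hxv⟩,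
      (degR_gcard_of_not_adj (x := ⟨x, hvx.symm⟩) hxv).symm⟩

lemma setOf_kappa_gcard_eq_image (u : Fin n) :
    {m | ∃ v : Fin n, v ≠ u ∧ deg G v = maxDeg G ∧ m = kappa (gcard G v) r}
      = (kappa G r - ·) '' (degR G r '' {v | v ≠ u ∧ deg G v = maxDeg G}) := by
  rw [Set.image_image]
  ext m
  simp only [kappa_gcard_eq_kappa_sub_degR]
  constructor
  · rintro ⟨v, hvu, hvΔ, rfl⟩
    exact ⟨v, ⟨hvu, hvΔ⟩, rfl⟩
  · rintro ⟨v, ⟨hvu, hvΔ⟩, rfl⟩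
    exact ⟨v, hvu, hvΔ, rfl⟩

end MaxDeg

theorem two_choices_general {n : ℕ} (hn : 7 ≤ n) (G : SimpleGraph (Fin n))
    (hDelta : maxDeg G ≤ n - 3) (r : ℕ) (u : Fin n)
    (hu : deg G u < maxDeg G ∨ ∃ v : Fin n, v ≠ u ∧ deg G v = maxDeg G) :
    let D : Set ℕ := {d | ∃ v : Fin n, v ≠ u ∧ ∃ x : {y : Fin n // y ≠ v},
      deg (gcard G v) x = maxDeg G ∧ d = degR (gcard G v) r x}
    let M : Set ℕ := {m | ∃ v : Fin n, v ≠ u ∧ deg G v = maxDeg G ∧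
      m = kappa (gcard G v) r}
    D.Nonempty ∧ M.Nonempty ∧
      (kappa G r = sInf D + sSup M ∨ kappa G r = sSup D + sInf M) := by
  intro D M
  set A := {x | deg G x = maxDeg G}
  set B := {x | x ≠ u ∧ deg G x = maxDeg G}
  have hD : D = degR G r '' A := setOf_degR_gcard_eq_image u (by omega)
  have hM : M = (kappa G r - ·) '' (degR G r '' B) := setOf_kappa_gcard_eq_image u
  have hB : (degR G r '' B).Nonempty := Set.Nonempty.image _ (exists_deg_eq_maxDeg_ne hu)
  have hfin : (degR G r '' B).Finite := Set.toFinite _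
  have hBA : degR G r '' B ⊆ degR G r '' A := Set.image_mono fun _ hx => hx.2
  have hAB : degR G r '' A ⊆ insert (degR G r u) (degR G r '' B) := by
    rw [← Set.image_insert_eq]
    exact Set.image_mono fun x hx => (eq_or_ne x u).imp id fun hxu => ⟨hxu, hx⟩
  have hle : ∀ m ∈ degR G r '' B, m ≤ kappa G r := by
    rintro _ ⟨x, -, rfl⟩
    exact degR_le_kappa x
  refine ⟨hD ▸ hB.mono hBA, hM ▸ hB.image _, ?_⟩
  rw [hD, hM, csSup_image_tsub _ hB hfin, csInf_image_tsub _ hB hfin]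
  rcases csInf_eq_or_csSup_eq_of_subset_insert hB hfin hBA hAB with h | h
  · have := hle _ (hB.csInf_mem hfin)
    omega
  · have := hle _ (hB.csSup_mem hfin)
    omega

theorem two_choices {n : ℕ} (hn : 7 ≤ n) (G : SimpleGraph (Fin n))
    (hDelta : maxDeg G ≤ n - 3) (r : ℕ) (hr : 1 ≤ r) (u : Fin n)
    (hu : deg G u < maxDeg G ∨ ∃ v : Fin n, v ≠ u ∧ deg G v = maxDeg G) :
    let D : Set ℕ := {d | ∃ v : Fin n, v ≠ u ∧ ∃ x : {y : Fin n // y ≠ v},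
      deg (gcard G v) x = maxDeg G ∧ d = degR (gcard G v) r x}
    let M : Set ℕ := {m | ∃ v : Fin n, v ≠ u ∧ deg G v = maxDeg G ∧
      m = kappa (gcard G v) r}
    D.Nonempty ∧ M.Nonempty ∧
      (kappa G r = sInf D + sSup M ∨ kappa G r = sSup D + sInf M) :=
  two_choices_general hn G hDelta r u hu
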